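/- Ω(δ) tends to 0 as δ tends to −∞, i.e. for every ε > 0 there exists a real number A such that for all δ < A one has 0 ≤ Ω(δ) < ε. -/

import Mathlib

open MeasureTheory

/-- The function Ω from the paper: for δ < 1, δ ≠ 1/2,
`Ω(δ) = (1/π) ∫₀¹ (1/(1+√(1−r))) (1−r)^(−1/2) ((1/(1−2δ))(r^(−1/2) − r^(−δ)) + r^(1/2−δ)) dr`. -/
noncomputable def Omega (δ : ℝ) : ℝ :=
  (1 / Real.pi) *
    ∫ r in Set.Ioo (0:ℝ) 1,
      (1 / (1 + Real.sqrt (1 - r))) * (1 - r) ^ (-(1:ℝ)/2) *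
        ((1 / (1 - 2*δ)) * (r ^ (-(1:ℝ)/2) - r ^ (-δ)) + r ^ ((1:ℝ)/2 - δ))

/-! For `δ ≤ 0` the integrand is dominated by `2 r^(-1/2) (1-r)^(-1/2)`, the integrand of
`B(1/2, 1/2)`, and it tends to `0` pointwise as `δ → -∞` because `1/(1-2δ)`, `r^(-δ)` and
`r^(1/2-δ)` do; dominated convergence gives `Ω(δ) → 0`. Nonnegativity holds for every `δ`. -/

open Set Filter Topology

lemma integrableOn_rpow_mul_one_sub_rpow {a b : ℝ} (ha : -1 < a) (hb : -1 < b) :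
    IntegrableOn (fun x : ℝ => x ^ a * (1 - x) ^ b) (Ioo 0 1) := by
  have h := Complex.betaIntegral_convergent (u := a + 1) (v := b + 1)
    (by simp; linarith) (by simp; linarith)
  rw [intervalIntegrable_iff_integrableOn_Ioo_of_le zero_le_one] at h
  refine IntegrableOn.congr_fun (Integrable.norm h) (fun x hx => ?_) measurableSet_Ioo
  have hx' : 0 ≤ 1 - x := by linarith [hx.2]
  simp only [add_sub_cancel_right, norm_mul]
  rw [← Complex.ofReal_one, ← Complex.ofReal_sub, ← Complex.ofReal_cpow hx.1.le,
    ← Complex.ofReal_cpow hx', Complex.norm_real, Complex.norm_real,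
    Real.norm_of_nonneg (Real.rpow_nonneg hx.1.le _), Real.norm_of_nonneg (Real.rpow_nonneg hx' _)]

lemma tendsto_const_sub_atBot_atTop (c : ℝ) : Tendsto (fun x : ℝ => c - x) atBot atTop :=
  tendsto_atBot_atTop.2 fun b => ⟨c - b, fun x hx => by linarith⟩

lemma tendsto_rpow_const_sub_atBot {r : ℝ} (hr0 : 0 ≤ r) (hr1 : r < 1) (c : ℝ) :
    Tendsto (fun x : ℝ => r ^ (c - x)) atBot (𝓝 0) :=
  (tendsto_rpow_atTop_of_base_lt_one r (by linarith) hr1).comp (tendsto_const_sub_atBot_atTop c)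

namespace Omega

noncomputable def integrand (δ r : ℝ) : ℝ :=
  (1 / (1 + Real.sqrt (1 - r))) * (1 - r) ^ (-(1:ℝ)/2) *
    ((1 / (1 - 2*δ)) * (r ^ (-(1:ℝ)/2) - r ^ (-δ)) + r ^ ((1:ℝ)/2 - δ))

lemma eq_integral_integrand (δ : ℝ) :
    Omega δ = (1 / Real.pi) * ∫ r in Ioo 0 1, integrand δ r := rfl

variable {δ r : ℝ}

/-- Both factors change sign at `δ = 1/2`, where `1 / 0 = 0` makes the product vanish. -/
lemma div_mul_rpow_sub_rpow_nonneg (hr : r ∈ Ioo (0:ℝ) 1) :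
    0 ≤ (1 / (1 - 2*δ)) * (r ^ (-(1:ℝ)/2) - r ^ (-δ)) := by
  rcases le_or_gt δ (1/2) with hδ | hδ
  · refine mul_nonneg (one_div_nonneg.2 (by linarith)) (sub_nonneg.2 ?_)
    exact Real.rpow_le_rpow_of_exponent_ge hr.1 hr.2.le (by linarith)
  · refine mul_nonneg_of_nonpos_of_nonpos (one_div_nonpos.2 (by linarith)) (sub_nonpos.2 ?_)
    exact Real.rpow_le_rpow_of_exponent_ge hr.1 hr.2.le (by linarith)

lemma integrand_nonneg (δ : ℝ) (hr : r ∈ Ioo (0:ℝ) 1) : 0 ≤ integrand δ r := by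
  have := div_mul_rpow_sub_rpow_nonneg (δ := δ) hr
  have := Real.rpow_nonneg hr.1.le ((1:ℝ)/2 - δ)
  have := Real.rpow_nonneg (sub_nonneg.2 hr.2.le) (-(1:ℝ)/2)
  unfold integrand
  positivity

lemma integrand_le (hδ : δ ≤ 0) (hr : r ∈ Ioo (0:ℝ) 1) :
    integrand δ r ≤ 2 * (r ^ (-(1:ℝ)/2) * (1 - r) ^ (-(1:ℝ)/2)) := by
  obtain ⟨hr0, hr1⟩ := hr
  have hBA : r ^ (-δ) ≤ r ^ (-(1:ℝ)/2) :=
    Real.rpow_le_rpow_of_exponent_ge hr0 hr1.le (by linarith)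
  have hCA : r ^ ((1:ℝ)/2 - δ) ≤ r ^ (-(1:ℝ)/2) :=
    Real.rpow_le_rpow_of_exponent_ge hr0 hr1.le (by linarith)
  have hdiv : 1 / (1 - 2*δ) * (r ^ (-(1:ℝ)/2) - r ^ (-δ)) ≤ r ^ (-(1:ℝ)/2) - r ^ (-δ) :=
    mul_le_of_le_one_left (sub_nonneg.2 hBA) ((div_le_one (by linarith)).2 (by linarith))
  have hsqrt : 1 / (1 + Real.sqrt (1 - r)) ≤ 1 :=
    (div_le_one (by positivity)).2 (le_add_of_nonneg_right (Real.sqrt_nonneg _))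
  have hB : 0 ≤ r ^ (-δ) := Real.rpow_nonneg hr0.le _
  have hprod := div_mul_rpow_sub_rpow_nonneg (δ := δ) ⟨hr0, hr1⟩
  calc integrand δ r ≤ 1 * (1 - r) ^ (-(1:ℝ)/2) * (r ^ (-(1:ℝ)/2) + r ^ (-(1:ℝ)/2)) := by
        unfold integrand
        gcongr
        linarith
    _ = 2 * (r ^ (-(1:ℝ)/2) * (1 - r) ^ (-(1:ℝ)/2)) := by ring

lemma tendsto_integrand_atBot (hr : r ∈ Ioo (0:ℝ) 1) :
    Tendsto (fun δ => integrand δ r) atBot (𝓝 0) := by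
  have hdiv : Tendsto (fun δ : ℝ => 1 / (1 - 2*δ)) atBot (𝓝 0) := by
    simpa [Function.comp_def] using tendsto_inv_atTop_zero.comp
      ((tendsto_const_sub_atBot_atTop 1).comp (tendsto_id.const_mul_atBot two_pos))
  have hpow := tendsto_rpow_const_sub_atBot hr.1.le hr.2
  have hinner : Tendsto (fun δ : ℝ =>
      (1 / (1 - 2*δ)) * (r ^ (-(1:ℝ)/2) - r ^ (-δ)) + r ^ ((1:ℝ)/2 - δ)) atBot (𝓝 0) := by
    simpa using (hdiv.mul (tendsto_const_nhds.sub (hpow 0))).add (hpow (1/2))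
  simpa [integrand] using hinner.const_mul ((1 / (1 + Real.sqrt (1 - r))) * (1 - r) ^ (-(1:ℝ)/2))

lemma nonneg (δ : ℝ) : 0 ≤ Omega δ :=
  mul_nonneg (by positivity)
    (setIntegral_nonneg measurableSet_Ioo fun _ hr => integrand_nonneg δ hr)

theorem tendsto_atBot : Tendsto Omega atBot (𝓝 0) := by
  have hmeas : ∀ δ, AEStronglyMeasurable (integrand δ) (volume.restrict (Ioo 0 1)) := fun δ =>
    (by unfold integrand; fun_prop : Measurable (integrand δ)).aestronglyMeasurable
  have hdom : ∀ᶠ δ in atBot, ∀ᵐ r ∂volume.restrict (Ioo 0 1),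
      ‖integrand δ r‖ ≤ 2 * (r ^ (-(1:ℝ)/2) * (1 - r) ^ (-(1:ℝ)/2)) := by
    filter_upwards [eventually_le_atBot 0] with δ hδ
    refine (ae_restrict_iff' measurableSet_Ioo).2 (.of_forall fun r hr => ?_)
    rw [Real.norm_of_nonneg (integrand_nonneg δ hr)]
    exact integrand_le hδ hr
  have hbound := (integrableOn_rpow_mul_one_sub_rpow (a := -(1:ℝ)/2) (b := -(1:ℝ)/2)
    (by norm_num) (by norm_num)).const_mul 2
  have hlim :
      ∀ᵐ r ∂volume.restrict (Ioo 0 1), Tendsto (fun δ => integrand δ r) atBot (𝓝 0) :=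
    (ae_restrict_iff' measurableSet_Ioo).2 (.of_forall fun _ hr => tendsto_integrand_atBot hr)
  simpa only [integral_zero, mul_zero] using
    ((tendsto_integral_filter_of_dominated_convergence _ (.of_forall hmeas) hdom hbound
      hlim).const_mul (1 / Real.pi)).congr fun δ => (eq_integral_integrand δ).symm

end Omega

theorem Omega_tendsto_zero_atBot :
    ∀ ε : ℝ, 0 < ε → ∃ A : ℝ, ∀ δ : ℝ, δ < A → 0 ≤ Omega δ ∧ Omega δ < ε := by
  intro ε hε
  obtain ⟨A, hA⟩ := eventually_atBot.1 (Omega.tendsto_atBot.eventually (gt_mem_nhds hε))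
  exact ⟨A, fun δ hδ => ⟨Omega.nonneg δ, hA δ hδ.le⟩⟩
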